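/- arXiv:2111.13322 — 2 statements merged into one kernel-verified Lean document; each statement's English description precedes it below -/
import Mathlib

section
/- (Theorem 2: one-epoch contraction of RR-SARAH.) Assume each f_i is convex, P is μ-strongly convex with minimizer w* and optimal value P*, the δ-similarity condition holds, and the step size satisfies 0 < η ≤ min(1/(8nL), 1/(8n²δ)). Fix any permutation π of {1,…,n} and any point w_s ∈ ℝ^d. Run one SARAH epoch with step size η, permutation π, start point w_s and initial direction ∇P(w_s), with epoch output w_{s+1}. Then P(w_{s+1}) − P* ≤ (1 − η·μ·(n+1)/2)·(P(w_s) − P*). -/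
/-!
Write `eⁱ = vⁱ - ∇P(wⁱ)` for the error of the SARAH direction. By δ-similarity each inner step
changes `eⁱ` by at most `(δ/2)·η‖vⁱ⁻¹‖`, and `e⁰ = 0`; likewise the iterates stay within
`η Σⱼ ‖vʲ‖` of `w_s`. Summing the descent inequality of the `L`-smooth `P` over the `n + 1` steps
decreases `P` by `η/2 · Σᵢ (‖∇P(wⁱ)‖² + (1 - Lη)‖vⁱ‖² - ‖eⁱ‖²)`. Under the step-size condition
both `Σ ‖eⁱ‖²` and the drift of `∇P(wⁱ)` away from `∇P(w_s)` are small multiples of `Σ ‖vⁱ‖²`, so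
`P` decreases by at least `η(n + 1)/4 · ‖∇P(w_s)‖²`; the Polyak–Łojasiewicz inequality
`2μ(P(w) - P*) ≤ ‖∇P(w)‖²` of a strongly convex function converts this into the contraction.
-/

open scoped RealInnerProductSpace
open Filter Topology Finset

variable {E : Type*} [NormedAddCommGroup E] [InnerProductSpace ℝ E]

section Gradient

variable [CompleteSpace E] {f : E → ℝ}

theorem hasDerivAt_apply_add_smul {x v : E} {t : ℝ} (hf : DifferentiableAt ℝ f (x + t • v)) :
    HasDerivAt (fun s : ℝ => f (x + s • v)) ⟪gradient f (x + t • v), v⟫ t := by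
  have hline : HasDerivAt (fun s : ℝ => x + s • v) v t := by
    simpa using ((hasDerivAt_id t).smul_const v).const_add x
  simpa [Function.comp_def] using hf.hasGradientAt.hasFDerivAt.comp_hasDerivAt t hline

theorem StrongConvexOn.add_inner_gradient_add_le {m : ℝ} (hf : StrongConvexOn Set.univ m f)
    {x : E} (hx : DifferentiableAt ℝ f x) (y : E) :
    f x + ⟪gradient f x, y - x⟫ + m / 2 * ‖y - x‖ ^ 2 ≤ f y := by
  have hslope : Tendsto (slope (fun t : ℝ => f (x + t • (y - x))) 0) (𝓝[>] 0)
      (𝓝 ⟪gradient f x, y - x⟫) := by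
    have h := hasDerivAt_apply_add_smul (t := 0) (v := y - x) (by simpa using hx)
    simp only [zero_smul, add_zero] at h
    exact (hasDerivAt_iff_tendsto_slope.1 h).mono_left
      (nhdsWithin_mono _ fun t ht => ne_of_gt ht)
  have hbound : Tendsto (fun t : ℝ => f y - f x - (1 - t) * (m / 2 * ‖y - x‖ ^ 2)) (𝓝[>] 0)
      (𝓝 (f y - f x - m / 2 * ‖y - x‖ ^ 2)) := by
    have : Continuous (fun t : ℝ => f y - f x - (1 - t) * (m / 2 * ‖y - x‖ ^ 2)) := by fun_prop
    simpa using (this.tendsto 0).mono_left nhdsWithin_le_nhds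
  have hle : ∀ᶠ t in 𝓝[>] (0 : ℝ), slope (fun t : ℝ => f (x + t • (y - x))) 0 t
      ≤ f y - f x - (1 - t) * (m / 2 * ‖y - x‖ ^ 2) := by
    filter_upwards [Ioo_mem_nhdsGT one_pos] with t ht
    have hcomb : x + t • (y - x) = (1 - t) • x + t • y := by
      rw [smul_sub, sub_smul, one_smul]; abel
    have h := hf.2 (Set.mem_univ x) (Set.mem_univ y) (sub_nonneg.2 ht.2.le) ht.1.le
      (sub_add_cancel 1 t)
    rw [← hcomb, norm_sub_rev, smul_eq_mul, smul_eq_mul] at h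
    rw [slope_def_field, sub_zero, zero_smul, add_zero, div_le_iff₀ ht.1]
    nlinarith
  have := le_of_tendsto_of_tendsto hslope hbound hle
  linarith

theorem StrongConvexOn.two_mul_sub_le_norm_gradient_sq {m : ℝ} (hm : 0 < m)
    (hf : StrongConvexOn Set.univ m f) {x : E} (hx : DifferentiableAt ℝ f x) (y : E) :
    2 * m * (f x - f y) ≤ ‖gradient f x‖ ^ 2 := by
  have h := hf.add_inner_gradient_add_le hx y
  -- completing the square: `⟪g, v⟫ + m/2 ‖v‖² = ‖g + m v‖² / (2m) - ‖g‖² / (2m)`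
  have hsq : 0 ≤ ‖gradient f x + m • (y - x)‖ ^ 2 := sq_nonneg _
  rw [norm_add_sq_real, norm_smul, real_inner_smul_right, Real.norm_of_nonneg hm.le] at hsq
  nlinarith

theorem le_add_inner_gradient_add_sq {L : ℝ} (hf : Differentiable ℝ f)
    (hLip : ∀ x y, ‖gradient f x - gradient f y‖ ≤ L * ‖x - y‖) (x y : E) :
    f y ≤ f x + ⟪gradient f x, y - x⟫ + L / 2 * ‖y - x‖ ^ 2 := by
  set v := y - x
  set φ : ℝ → ℝ := fun t => f (x + t • v) - t * ⟪gradient f x, v⟫ - L / 2 * ‖v‖ ^ 2 * t ^ 2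
  have hφ : ∀ t,
      HasDerivAt φ (⟪gradient f (x + t • v), v⟫ - ⟪gradient f x, v⟫ - L * ‖v‖ ^ 2 * t) t := by
    intro t
    have h := (((hasDerivAt_apply_add_smul (hf (x + t • v))).sub ((hasDerivAt_id t).mul_const
      ⟪gradient f x, v⟫)).sub ((hasDerivAt_pow 2 t).const_mul (L / 2 * ‖v‖ ^ 2)))
    exact h.congr_deriv (by simp; ring)
  have hanti : AntitoneOn φ (Set.Icc 0 1) := by
    refine antitoneOn_of_deriv_nonpos (convex_Icc 0 1)
      (HasDerivAt.continuousOn fun t _ => hφ t)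
      (fun t _ => (hφ t).differentiableAt.differentiableWithinAt) fun t ht => ?_
    rw [interior_Icc] at ht
    rw [(hφ t).deriv, ← inner_sub_left]
    calc ⟪gradient f (x + t • v) - gradient f x, v⟫ - L * ‖v‖ ^ 2 * t
        ≤ L * ‖x + t • v - x‖ * ‖v‖ - L * ‖v‖ ^ 2 * t := by
          gcongr; exact (real_inner_le_norm _ _).trans (by gcongr; exact hLip _ _)
      _ = 0 := by
          rw [add_sub_cancel_left, norm_smul, Real.norm_of_nonneg ht.1.le]; ring
  have h := hanti (by norm_num) (by norm_num) zero_le_one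
  simp only [φ, v, zero_smul, add_zero, one_smul, add_sub_cancel, zero_mul, sub_zero, one_pow,
    mul_one, ne_eq, OfNat.ofNat_ne_zero, not_false_eq_true, zero_pow, one_mul] at h
  linarith

theorem apply_sub_smul_le {L : ℝ} (hf : Differentiable ℝ f)
    (hLip : ∀ x y, ‖gradient f x - gradient f y‖ ≤ L * ‖x - y‖) {η : ℝ} (hη : 0 ≤ η) (x v : E) :
    f (x - η • v) ≤
      f x - η / 2 * (‖gradient f x‖ ^ 2 + (1 - L * η) * ‖v‖ ^ 2 - ‖v - gradient f x‖ ^ 2) := by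
  have h := le_add_inner_gradient_add_sq hf hLip x (x - η • v)
  rw [sub_sub_cancel_left, inner_neg_right, real_inner_smul_right, norm_neg, norm_smul,
    Real.norm_of_nonneg hη] at h
  rw [norm_sub_sq_real, real_inner_comm]
  nlinarith

theorem gradient_const_mul_sum {ι : Type*} {s : Finset ι} {F : ι → E → ℝ}
    (hF : ∀ i ∈ s, Differentiable ℝ (F i)) (c : ℝ) (w : E) :
    gradient (fun w => c * ∑ i ∈ s, F i w) w = c • ∑ i ∈ s, gradient (F i) w := by
  have hsum : DifferentiableAt ℝ (fun w => ∑ i ∈ s, F i w) w := by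
    fun_prop (disch := assumption)
  rw [gradient, fderiv_const_mul hsum, fderiv_fun_sum fun i hi => (hF i hi).differentiableAt,
    map_smul, map_sum]
  rfl

theorem norm_gradient_avg_sub_le {n : ℕ} {F : Fin n → E → ℝ} {L : ℝ} (hL : 0 ≤ L)
    (hF : ∀ i, Differentiable ℝ (F i))
    (hLip : ∀ i x y, ‖gradient (F i) x - gradient (F i) y‖ ≤ L * ‖x - y‖) (x y : E) :
    ‖gradient (fun w => (1 / (n : ℝ)) * ∑ i, F i w) x
      - gradient (fun w => (1 / (n : ℝ)) * ∑ i, F i w) y‖ ≤ L * ‖x - y‖ := by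
  rw [gradient_const_mul_sum (fun i _ => hF i), gradient_const_mul_sum (fun i _ => hF i),
    ← smul_sub, ← sum_sub_distrib, norm_smul]
  calc ‖1 / (n : ℝ)‖ * ‖∑ i, (gradient (F i) x - gradient (F i) y)‖
      ≤ 1 / n * ∑ _i : Fin n, L * ‖x - y‖ := by
        rw [Real.norm_of_nonneg (by positivity)]
        gcongr
        exact (norm_sum_le _ _).trans (sum_le_sum fun i _ => hLip i x y)
    _ = (n / n) * (L * ‖x - y‖) := by
        rw [sum_const, card_univ, Fintype.card_fin, nsmul_eq_mul]; ring
    _ ≤ L * ‖x - y‖ := by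
        apply mul_le_of_le_one_left (by positivity) (div_self_le_one _)

end Gradient

theorem sq_sum_range_le_mul_sum_sq (x : ℕ → ℝ) {k m : ℕ} (hk : k ≤ m) :
    (∑ j ∈ range k, x j) ^ 2 ≤ m * ∑ j ∈ range (m + 1), x j ^ 2 := by
  calc (∑ j ∈ range k, x j) ^ 2 ≤ k * ∑ j ∈ range k, x j ^ 2 := by
        simpa using sq_sum_le_card_mul_sum_sq (s := range k) (f := x)
    _ ≤ m * ∑ j ∈ range (m + 1), x j ^ 2 := by
        gcongr
        omega

theorem sarah_step_size_bound {n : ℕ} {L δ η : ℝ} (hn : 1 ≤ n) (hL : 0 ≤ L) (hδ : 0 ≤ δ)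
    (hη : 0 ≤ η) (hηL : 8 * n * L * η ≤ 1) (hηδ : 8 * n ^ 2 * δ * η ≤ 1) :
    L * η + (n + 1) * n * (L * η) ^ 2 + (n + 1) * n * (δ / 2 * η) ^ 2 ≤ 1 := by
  have hn' : (1 : ℝ) ≤ n := by exact_mod_cast hn
  have ha : 0 ≤ n * (L * η) := by positivity
  have hb : 0 ≤ n ^ 2 * (δ * η) := by positivity
  have hLη : L * η ≤ n * (L * η) := le_mul_of_one_le_left (by positivity) hn'
  have hsq : (n + 1) * n * (L * η) ^ 2 ≤ 2 * (n * (L * η)) ^ 2 := by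
    nlinarith [sq_nonneg (L * η)]
  have hsq' : (n + 1) * n * (δ / 2 * η) ^ 2 ≤ (n ^ 2 * (δ * η)) ^ 2 / 2 := by
    have h4 : ((n : ℝ) + 1) * n ≤ 2 * n ^ 4 :=
      calc ((n : ℝ) + 1) * n ≤ 2 * n ^ 2 := by nlinarith
        _ ≤ 2 * n ^ 4 := by gcongr; norm_num [hn']
    nlinarith [mul_le_mul_of_nonneg_right h4 (sq_nonneg (δ * η))]
  nlinarith

structure IsSarahEpoch {n : ℕ} (η : ℝ) (G : Fin n → E → E) (W V : ℕ → E) : Prop where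
  step : ∀ i : Fin n, W (i + 1) = W i - η • V i
  direction : ∀ i : Fin n, V (i + 1) = V i + G i (W (i + 1)) - G i (W i)

namespace IsSarahEpoch

variable {n : ℕ} {η : ℝ} {G : Fin n → E → E} {W V : ℕ → E}

theorem norm_sub_start_le (h : IsSarahEpoch η G W V) (hη : 0 ≤ η) {k : ℕ} (hk : k ≤ n) :
    ‖W k - W 0‖ ≤ η * ∑ j ∈ range k, ‖V j‖ := by
  rw [← dist_eq_norm, dist_comm, mul_sum]
  refine dist_le_range_sum_of_dist_le k fun {j} hj => ?_
  rw [dist_eq_norm, h.step ⟨j, by omega⟩, sub_sub_cancel, norm_smul, Real.norm_of_nonneg hη]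

theorem norm_sub_gradient_le (h : IsSarahEpoch η G W V) (hη : 0 ≤ η) {g : E → E} {c : ℝ}
    (hV0 : V 0 = g (W 0)) (hG : ∀ i x y, ‖(G i x - g x) - (G i y - g y)‖ ≤ c * ‖x - y‖)
    {k : ℕ} (hk : k ≤ n) :
    ‖V k - g (W k)‖ ≤ c * η * ∑ j ∈ range k, ‖V j‖ := by
  have h0 : V 0 - g (W 0) = 0 := sub_eq_zero.2 hV0
  rw [← sub_zero (V k - g (W k)), ← h0, ← dist_eq_norm, dist_comm, mul_sum]
  refine dist_le_range_sum_of_dist_le (f := fun j => V j - g (W j)) k fun {j} hj => ?_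
  have hj' : j < n := by omega
  calc dist (V j - g (W j)) (V (j + 1) - g (W (j + 1)))
      = ‖(G ⟨j, hj'⟩ (W (j + 1)) - g (W (j + 1))) - (G ⟨j, hj'⟩ (W j) - g (W j))‖ := by
        rw [dist_comm, dist_eq_norm, h.direction ⟨j, hj'⟩]; congr 1; abel
    _ ≤ c * ‖W (j + 1) - W j‖ := hG _ _ _
    _ = c * η * ‖V j‖ := by
        rw [h.step ⟨j, hj'⟩, sub_sub_cancel_left, norm_neg, norm_smul,
          Real.norm_of_nonneg hη, mul_assoc]

theorem sum_descent [CompleteSpace E] (h : IsSarahEpoch η G W V) {f : E → ℝ} {L : ℝ}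
    (hf : Differentiable ℝ f) (hLip : ∀ x y, ‖gradient f x - gradient f y‖ ≤ L * ‖x - y‖)
    (hη : 0 ≤ η) :
    f (W n - η • V n) + η / 2 * ∑ j ∈ range (n + 1), (‖gradient f (W j)‖ ^ 2
        + (1 - L * η) * ‖V j‖ ^ 2 - ‖V j - gradient f (W j)‖ ^ 2) ≤ f (W 0) := by
  have htele : ∀ k ≤ n, f (W k) + η / 2 * ∑ j ∈ range k, (‖gradient f (W j)‖ ^ 2
      + (1 - L * η) * ‖V j‖ ^ 2 - ‖V j - gradient f (W j)‖ ^ 2) ≤ f (W 0) := by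
    intro k hk
    induction k with
    | zero => simp
    | succ k ih =>
      have hstep := apply_sub_smul_le hf hLip hη (W k) (V k)
      rw [← h.step ⟨k, hk⟩] at hstep
      rw [sum_range_succ, mul_add]
      linarith [ih (by omega)]
  rw [sum_range_succ, mul_add]
  linarith [htele n le_rfl, apply_sub_smul_le hf hLip hη (W n) (V n)]

theorem sum_norm_sub_sq_le (h : IsSarahEpoch η G W V) (hη : 0 ≤ η) {g : E → E} {c : ℝ}
    (hV0 : V 0 = g (W 0)) (hG : ∀ i x y, ‖(G i x - g x) - (G i y - g y)‖ ≤ c * ‖x - y‖) :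
    ∑ j ∈ range (n + 1), ‖V j - g (W j)‖ ^ 2
      ≤ (n + 1) * ((c * η) ^ 2 * (n * ∑ j ∈ range (n + 1), ‖V j‖ ^ 2)) := by
  have hk : ∀ k ∈ range (n + 1), ‖V k - g (W k)‖ ^ 2
      ≤ (c * η) ^ 2 * (n * ∑ j ∈ range (n + 1), ‖V j‖ ^ 2) := by
    intro k hk
    have hkn : k ≤ n := Nat.lt_succ_iff.1 (mem_range.1 hk)
    calc ‖V k - g (W k)‖ ^ 2 ≤ (c * η * ∑ j ∈ range k, ‖V j‖) ^ 2 :=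
          pow_le_pow_left₀ (norm_nonneg _) (h.norm_sub_gradient_le hη hV0 hG hkn) 2
      _ = (c * η) ^ 2 * (∑ j ∈ range k, ‖V j‖) ^ 2 := by ring
      _ ≤ _ := by gcongr; exact sq_sum_range_le_mul_sum_sq _ hkn
  simpa using sum_le_card_nsmul _ _ _ hk

theorem norm_apply_start_sq_le (h : IsSarahEpoch η G W V) (hη : 0 ≤ η) {g : E → E} {L : ℝ}
    (hLip : ∀ x y, ‖g x - g y‖ ≤ L * ‖x - y‖) (hL : 0 ≤ L) :
    (n + 1) * ‖g (W 0)‖ ^ 2 ≤ 2 * ∑ j ∈ range (n + 1), ‖g (W j)‖ ^ 2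
      + (n + 1) * (2 * (L * η) ^ 2 * (n * ∑ j ∈ range (n + 1), ‖V j‖ ^ 2)) := by
  have hk : ∀ k ∈ range (n + 1), ‖g (W 0)‖ ^ 2
      ≤ 2 * ‖g (W k)‖ ^ 2 + 2 * (L * η) ^ 2 * (n * ∑ j ∈ range (n + 1), ‖V j‖ ^ 2) := by
    intro k hk
    have hkn : k ≤ n := Nat.lt_succ_iff.1 (mem_range.1 hk)
    have hdist : ‖g (W 0) - g (W k)‖ ≤ L * η * ∑ j ∈ range k, ‖V j‖ := by
      rw [mul_assoc, norm_sub_rev]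
      exact (hLip _ _).trans (by gcongr; exact h.norm_sub_start_le hη hkn)
    calc ‖g (W 0)‖ ^ 2 ≤ (‖g (W k)‖ + ‖g (W 0) - g (W k)‖) ^ 2 := by
          gcongr; exact norm_le_norm_add_norm_sub' _ _
      _ ≤ 2 * (‖g (W k)‖ ^ 2 + ‖g (W 0) - g (W k)‖ ^ 2) := add_sq_le
      _ ≤ 2 * (‖g (W k)‖ ^ 2 + (L * η) ^ 2 * (∑ j ∈ range k, ‖V j‖) ^ 2) := by
          gcongr; rw [← mul_pow]; exact pow_le_pow_left₀ (norm_nonneg _) hdist 2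
      _ ≤ _ := by
          have := sq_sum_range_le_mul_sum_sq (fun j => ‖V j‖) hkn
          nlinarith [sq_nonneg (L * η)]
  have := sum_le_sum hk
  rw [sum_add_distrib, ← mul_sum, sum_const, card_range, nsmul_eq_mul] at this
  simpa using this

theorem le_sub_norm_gradient_sq [CompleteSpace E] (h : IsSarahEpoch η G W V) {P : E → ℝ} {L δ : ℝ}
    (hP : Differentiable ℝ P) (hPLip : ∀ x y, ‖gradient P x - gradient P y‖ ≤ L * ‖x - y‖)
    (hsim : ∀ i x y, ‖(G i x - gradient P x) - (G i y - gradient P y)‖ ≤ δ / 2 * ‖x - y‖)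
    (hV0 : V 0 = gradient P (W 0)) (hn : 1 ≤ n) (hL : 0 ≤ L) (hδ : 0 ≤ δ) (hη : 0 ≤ η)
    (hηL : 8 * n * L * η ≤ 1) (hηδ : 8 * n ^ 2 * δ * η ≤ 1) :
    P (W n - η • V n) ≤ P (W 0) - η * (n + 1) / 4 * ‖gradient P (W 0)‖ ^ 2 := by
  have hS : 0 ≤ ∑ j ∈ range (n + 1), ‖V j‖ ^ 2 := sum_nonneg fun _ _ => sq_nonneg _
  have hdesc := h.sum_descent hP hPLip hη
  have herr := h.sum_norm_sub_sq_le hη hV0 hsim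
  have hstart := h.norm_apply_start_sq_le hη hPLip hL
  have hcoef := mul_le_mul_of_nonneg_right (sarah_step_size_bound hn hL hδ hη hηL hηδ) hS
  rw [sum_sub_distrib, sum_add_distrib, ← mul_sum] at hdesc
  have hgap : (n + 1) / 2 * ‖gradient P (W 0)‖ ^ 2 ≤ ∑ j ∈ range (n + 1), ‖gradient P (W j)‖ ^ 2
      + (1 - L * η) * ∑ j ∈ range (n + 1), ‖V j‖ ^ 2
      - ∑ j ∈ range (n + 1), ‖V j - gradient P (W j)‖ ^ 2 := by
    linarith
  linarith [mul_le_mul_of_nonneg_left hgap (by positivity : 0 ≤ η / 2)]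

end IsSarahEpoch

theorem rr_sarah_one_epoch_contraction_general
    {d n : ℕ} (hn : 1 ≤ n)
    (f : Fin n → EuclideanSpace ℝ (Fin d) → ℝ)
    (P : EuclideanSpace ℝ (Fin d) → ℝ)
    (hP : ∀ w, P w = (1 / (n : ℝ)) * ∑ i, f i w)
    (L μ δ η : ℝ) (hL : 0 < L) (hμ : 0 < μ) (hδ : 0 < δ)
    (hdiff : ∀ i, Differentiable ℝ (f i))
    (hLip : ∀ i w₁ w₂, ‖gradient (f i) w₁ - gradient (f i) w₂‖ ≤ L * ‖w₁ - w₂‖)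
    (hsc : StrongConvexOn Set.univ μ P)
    (wstar : EuclideanSpace ℝ (Fin d))
    (Pstar : ℝ) (hPstar : Pstar = P wstar)
    (hsim : ∀ i w₁ w₂,
      ‖(gradient (f i) w₁ - gradient P w₁) - (gradient (f i) w₂ - gradient P w₂)‖
        ≤ (δ / 2) * ‖w₁ - w₂‖)
    (hη0 : 0 < η)
    (hη : η ≤ min (1 / (8 * n * L)) (1 / (8 * n ^ 2 * δ)))
    (π : Equiv.Perm (Fin n))
    (ws : EuclideanSpace ℝ (Fin d))
    -- one SARAH epoch: start point `ws`, initial direction `∇P(ws)`, permutation `π`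
    (W V : ℕ → EuclideanSpace ℝ (Fin d))
    (hW0 : W 0 = ws) (hV0 : V 0 = gradient P ws)
    (hWrec : ∀ i : Fin n, W ((i : ℕ) + 1) = W i - η • V i)
    (hVrec : ∀ i : Fin n, V ((i : ℕ) + 1)
      = V i + gradient (f (π i)) (W ((i : ℕ) + 1)) - gradient (f (π i)) (W i))
    (wnext : EuclideanSpace ℝ (Fin d)) (hwnext : wnext = W n - η • V n) :
    P wnext - Pstar ≤ (1 - η * μ * ((n : ℝ) + 1) / 2) * (P ws - Pstar) := by
  subst hW0 hwnext hPstar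
  have hPdiff : Differentiable ℝ P := by
    rw [funext hP]; fun_prop
  have hPLip : ∀ x y, ‖gradient P x - gradient P y‖ ≤ L * ‖x - y‖ := by
    rw [funext hP]; exact norm_gradient_avg_sub_le hL.le hdiff hLip
  have hn' : (0 : ℝ) < n := by exact_mod_cast hn
  have hηL : 8 * n * L * η ≤ 1 := by
    have := (le_min_iff.1 hη).1
    rwa [le_div_iff₀ (by positivity), mul_comm η] at this
  have hηδ : 8 * n ^ 2 * δ * η ≤ 1 := by
    have := (le_min_iff.1 hη).2
    rwa [le_div_iff₀ (by positivity), mul_comm η] at this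
  have hdesc := IsSarahEpoch.le_sub_norm_gradient_sq (G := fun i => gradient (f (π i)))
    ⟨hWrec, hVrec⟩ hPdiff hPLip (fun i => hsim (π i)) hV0 hn hL.le hδ.le hη0.le hηL hηδ
  have hPL := hsc.two_mul_sub_le_norm_gradient_sq hμ (hPdiff (W 0)) wstar
  linarith [mul_le_mul_of_nonneg_left hPL (by positivity : 0 ≤ η * (n + 1) / 4)]

/-- Theorem 2: one-epoch contraction of RR-SARAH. -/
theorem rr_sarah_one_epoch_contraction
    {d n : ℕ} (hd : 1 ≤ d) (hn : 1 ≤ n)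
    (f : Fin n → EuclideanSpace ℝ (Fin d) → ℝ)
    (P : EuclideanSpace ℝ (Fin d) → ℝ)
    (hP : ∀ w, P w = (1 / (n : ℝ)) * ∑ i, f i w)
    (L μ δ η : ℝ) (hL : 0 < L) (hμ : 0 < μ) (hδ : 0 < δ)
    (hdiff : ∀ i, Differentiable ℝ (f i))
    (hconv : ∀ i, ConvexOn ℝ Set.univ (f i))
    (hLip : ∀ i w₁ w₂, ‖gradient (f i) w₁ - gradient (f i) w₂‖ ≤ L * ‖w₁ - w₂‖)
    (hsc : StrongConvexOn Set.univ μ P)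
    (wstar : EuclideanSpace ℝ (Fin d)) (hmin : IsMinOn P Set.univ wstar)
    (Pstar : ℝ) (hPstar : Pstar = P wstar)
    (hsim : ∀ i w₁ w₂,
      ‖(gradient (f i) w₁ - gradient P w₁) - (gradient (f i) w₂ - gradient P w₂)‖
        ≤ (δ / 2) * ‖w₁ - w₂‖)
    (hη0 : 0 < η)
    (hη : η ≤ min (1 / (8 * n * L)) (1 / (8 * n ^ 2 * δ)))
    (π : Equiv.Perm (Fin n))
    (ws : EuclideanSpace ℝ (Fin d))
    -- one SARAH epoch: start point `ws`, initial direction `∇P(ws)`, permutation `π`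
    (W V : ℕ → EuclideanSpace ℝ (Fin d))
    (hW0 : W 0 = ws) (hV0 : V 0 = gradient P ws)
    (hWrec : ∀ i : Fin n, W ((i : ℕ) + 1) = W i - η • V i)
    (hVrec : ∀ i : Fin n, V ((i : ℕ) + 1)
      = V i + gradient (f (π i)) (W ((i : ℕ) + 1)) - gradient (f (π i)) (W i))
    (wnext : EuclideanSpace ℝ (Fin d)) (hwnext : wnext = W n - η • V n) :
    P wnext - Pstar ≤ (1 - η * μ * ((n : ℝ) + 1) / 2) * (P ws - Pstar) :=
  rr_sarah_one_epoch_contraction_general hn f P hP L μ δ η hL hμ hδ hdiff hLip hsc wstar Pstar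
    hPstar hsim hη0 hη π ws W V hW0 hV0 hWrec hVrec wnext hwnext
end

section
/- (Corollary to Theorem 2, geometric decay form.) Assume each f_i is convex, P is μ-strongly convex with minimizer w* and optimal value P*, the δ-similarity condition holds, and 0 < η ≤ min(1/(8nL), 1/(8n²δ)). Define the RR-SARAH trajectory: given w_0 ∈ ℝ^d and permutations π_s of {1,…,n} for each s ≥ 0, let w_{s+1} be the output of a SARAH epoch with step size η, permutation π_s, start point w_s and initial direction ∇P(w_s). Then for every S ≥ 0: P(w_S) − P* ≤ (1 − η·μ·(n+1)/2)^{S} · (P(w_0) − P*). -/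
/-!
Within an epoch each SARAH step moves the direction by at most `ηL‖vⁱ‖`, so for `nηL ≤ 1/8`
every `vⁱ` stays within `‖∇P u‖ / 7` of `v⁰ = ∇P u`. The epoch step `-η ∑ vⁱ` is then, up to a
small error, `n + 1` gradient steps from `u`, and the descent lemma for the `L`-smooth `P` gives
`P w⁺ ≤ P u - η (n + 1) / 4 * ‖∇P u‖²`. The Polyak–Łojasiewicz inequality
`2μ (P u - P*) ≤ ‖∇P u‖²` of the strongly convex `P` turns this into the contraction
`P w⁺ - P* ≤ (1 - ημ (n + 1) / 2) (P u - P*)`.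
-/

open scoped RealInnerProductSpace
open Finset

theorem one_add_pow_mul_one_sub_mul_le_one {c : ℝ} (hc0 : 0 ≤ c) (hc1 : c ≤ 1) (n : ℕ) :
    (1 + c) ^ n * (1 - n * c) ≤ 1 := by
  have hbernoulli : 1 - n * c ≤ (1 - c) ^ n := by
    simpa [sub_eq_add_neg] using one_add_mul_le_pow (a := -c) (by linarith) n
  calc (1 + c) ^ n * (1 - n * c) ≤ (1 + c) ^ n * (1 - c) ^ n := by gcongr
    _ = (1 - c ^ 2) ^ n := by rw [← mul_pow]; ring
    _ ≤ 1 := pow_le_one₀ (by nlinarith) (by nlinarith)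

theorem le_pow_mul_of_le_mul {a : ℕ → ℝ} {r : ℝ} (h0 : ∀ k, 0 ≤ a k)
    (h : ∀ k, a (k + 1) ≤ r * a k) (k : ℕ) : a k ≤ r ^ k * a 0 := by
  rcases le_or_gt 0 r with hr | hr
  · exact le_geom hr k fun j _ => h j
  · have hzero : ∀ j, a j = 0 := fun j => by nlinarith [h0 j, h0 (j + 1), h j]
    simp [hzero]

section NormedGroup

variable {E : Type*} [NormedAddCommGroup E]

theorem norm_sub_zero_le_of_norm_succ_sub_le {V : ℕ → E} {c : ℝ} {m : ℕ} (hc : 0 ≤ c)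
    (h : ∀ i < m, ‖V (i + 1) - V i‖ ≤ c * ‖V i‖) :
    ∀ i ≤ m, ‖V i - V 0‖ ≤ ((1 + c) ^ i - 1) * ‖V 0‖ := by
  intro i
  induction i with
  | zero => simp
  | succ i ih =>
    intro hi
    have hdev := ih (by omega)
    have hstep := h i (by omega)
    have hVi : ‖V i‖ ≤ ‖V i - V 0‖ + ‖V 0‖ := norm_le_norm_sub_add (V i) (V 0)
    calc ‖V (i + 1) - V 0‖ ≤ ‖V (i + 1) - V i‖ + ‖V i - V 0‖ :=
          norm_sub_le_norm_sub_add_norm_sub _ _ _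
      _ ≤ c * (‖V i - V 0‖ + ‖V 0‖) + ‖V i - V 0‖ := by gcongr; exact hstep.trans (by gcongr)
      _ ≤ c * (((1 + c) ^ i - 1) * ‖V 0‖ + ‖V 0‖) + ((1 + c) ^ i - 1) * ‖V 0‖ := by gcongr
      _ = ((1 + c) ^ (i + 1) - 1) * ‖V 0‖ := by ring

theorem norm_sum_le_card_mul_of_norm_sub_le {ι : Type*} (s : Finset ι) {v : ι → E} {v₀ : E}
    {θ : ℝ} (h : ∀ i ∈ s, ‖v i - v₀‖ ≤ θ * ‖v₀‖) :
    ‖∑ i ∈ s, v i‖ ≤ #s * ((1 + θ) * ‖v₀‖) := by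
  calc ‖∑ i ∈ s, v i‖ ≤ ∑ i ∈ s, ‖v i‖ := norm_sum_le _ _
    _ ≤ ∑ _i ∈ s, (1 + θ) * ‖v₀‖ := sum_le_sum fun i hi => by
        have := norm_le_norm_sub_add (v i) v₀
        linarith [h i hi]
    _ = #s * ((1 + θ) * ‖v₀‖) := by rw [sum_const, nsmul_eq_mul]

end NormedGroup

theorem card_mul_le_inner_sum_of_norm_sub_le {E : Type*} [NormedAddCommGroup E]
    [InnerProductSpace ℝ E] {ι : Type*} (s : Finset ι) {v : ι → E} {v₀ : E}
    {θ : ℝ} (h : ∀ i ∈ s, ‖v i - v₀‖ ≤ θ * ‖v₀‖) :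
    #s * ((1 - θ) * ‖v₀‖ ^ 2) ≤ ⟪v₀, ∑ i ∈ s, v i⟫ := by
  rw [inner_sum]
  calc #s * ((1 - θ) * ‖v₀‖ ^ 2) = ∑ _i ∈ s, (1 - θ) * ‖v₀‖ ^ 2 := by rw [sum_const, nsmul_eq_mul]
    _ ≤ ∑ i ∈ s, ⟪v₀, v i⟫ := sum_le_sum fun i hi => by
        have hsplit : ⟪v₀, v i⟫ = ‖v₀‖ ^ 2 + ⟪v₀, v i - v₀⟫ := by
          rw [inner_sub_right, real_inner_self_eq_norm_sq]; ring
        have hcs := neg_le_of_abs_le (abs_real_inner_le_norm v₀ (v i - v₀))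
        have := mul_le_mul_of_nonneg_left (h i hi) (norm_nonneg v₀)
        nlinarith

theorem eq_sub_smul_sum_of_eq_sub_smul {M : Type*} [AddCommGroup M] [Module ℝ M] {W V : ℕ → M}
    {η : ℝ} {m : ℕ} (h : ∀ i < m, W (i + 1) = W i - η • V i) :
    W m = W 0 - η • ∑ i ∈ range m, V i := by
  induction m with
  | zero => simp
  | succ m ih =>
    rw [h m (by omega), ih fun i hi => h i (by omega), sum_range_succ, smul_add]
    abel

section Gradient

variable {E : Type*} [NormedAddCommGroup E] [InnerProductSpace ℝ E] [CompleteSpace E]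
  {g : E → ℝ} {x y : E}

theorem HasGradientAt.hasDerivAt_comp_lineMap {g' : E} {t : ℝ}
    (h : HasGradientAt g g' (AffineMap.lineMap x y t)) :
    HasDerivAt (fun s : ℝ => g (AffineMap.lineMap x y s)) ⟪g', y - x⟫ t :=
  (hasGradientAt_iff_hasFDerivAt.mp h).comp_hasDerivAt t AffineMap.hasDerivAt_lineMap

theorem HasGradientAt.sub {f g : E → ℝ} {f' g' : E} (hf : HasGradientAt f f' x)
    (hg : HasGradientAt g g' x) :
    HasGradientAt (fun z => f z - g z) (f' - g') x := by
  rw [hasGradientAt_iff_hasFDerivAt, map_sub]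
  exact HasFDerivAt.sub hf hg

theorem hasGradientAt_const_mul_norm_sq (c : ℝ) (x : E) :
    HasGradientAt (fun z : E => c / 2 * ‖z‖ ^ 2) (c • x) x := by
  rw [hasGradientAt_iff_hasFDerivAt]
  refine ((hasStrictFDerivAt_norm_sq x).hasFDerivAt.const_mul (c / 2)).congr_fderiv ?_
  ext z
  simp only [smul_apply, coe_innerSL_apply, nsmul_eq_mul, Nat.cast_ofNat, smul_eq_mul, map_smul,
    InnerProductSpace.toDual_apply_apply]
  ring

theorem ConvexOn.add_inner_gradient_le (hg : ConvexOn ℝ Set.univ g) (hx : DifferentiableAt ℝ g x)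
    (y : E) : g x + ⟪gradient g x, y - x⟫ ≤ g y := by
  have hline : ConvexOn ℝ Set.univ (fun s : ℝ => g (AffineMap.lineMap x y s)) :=
    hg.comp_affineMap (AffineMap.lineMap x y)
  have hderiv := HasGradientAt.hasDerivAt_comp_lineMap (x := x) (y := y) (t := 0)
    (by simpa using hx.hasGradientAt)
  have := hline.le_slope_of_hasDerivAt (Set.mem_univ 0) (Set.mem_univ 1) zero_lt_one hderiv
  simp only [slope_def_field, AffineMap.lineMap_apply_zero, AffineMap.lineMap_apply_one, sub_zero,
    div_one] at this
  linarith

theorem StrongConvexOn.add_inner_gradient_add_sq_le {μ : ℝ} (hg : StrongConvexOn Set.univ μ g)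
    (hx : DifferentiableAt ℝ g x) (y : E) :
    g x + ⟪gradient g x, y - x⟫ + μ / 2 * ‖y - x‖ ^ 2 ≤ g y := by
  have hgrad := hx.hasGradientAt.sub (hasGradientAt_const_mul_norm_sq μ x)
  have hconv := (strongConvexOn_iff_convex.mp hg).add_inner_gradient_le hgrad.differentiableAt y
  rw [hgrad.gradient, inner_sub_left, real_inner_smul_left] at hconv
  have hexpand := norm_add_sq_real x (y - x)
  rw [add_sub_cancel] at hexpand
  rw [hexpand] at hconv
  linarith

theorem StrongConvexOn.two_mul_sub_le_sq_norm_gradient {μ : ℝ} (hg : StrongConvexOn Set.univ μ g)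
    (hμ : 0 < μ) (hx : DifferentiableAt ℝ g x) {xmin : E} (hmin : IsMinOn g Set.univ xmin) :
    2 * μ * (g x - g xmin) ≤ ‖gradient g x‖ ^ 2 := by
  have h := hg.add_inner_gradient_add_sq_le hx xmin
  have := neg_le_of_abs_le (abs_real_inner_le_norm (gradient g x) (xmin - x))
  have := hmin (Set.mem_univ x)
  nlinarith [sq_nonneg (‖gradient g x‖ - μ * ‖xmin - x‖)]
theorem le_add_inner_gradient_add_sq_of_lipschitz {L : ℝ} (hg : Differentiable ℝ g)
    (hlip : ∀ a b, ‖gradient g a - gradient g b‖ ≤ L * ‖a - b‖) (x y : E) :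
    g y ≤ g x + ⟪gradient g x, y - x⟫ + L / 2 * ‖y - x‖ ^ 2 := by
  set ψ : ℝ → ℝ := fun t =>
    g (AffineMap.lineMap x y t) - t * ⟪gradient g x, y - x⟫ - L / 2 * ‖y - x‖ ^ 2 * t ^ 2
  set ψ' : ℝ → ℝ := fun t =>
    ⟪gradient g (AffineMap.lineMap x y t), y - x⟫ - ⟪gradient g x, y - x⟫ - L * ‖y - x‖ ^ 2 * t
  have hψ : ∀ t, HasDerivAt ψ (ψ' t) t := fun t => by
    have hline : HasDerivAt (fun s : ℝ => g (AffineMap.lineMap x y s))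
        ⟪gradient g (AffineMap.lineMap x y t), y - x⟫ t :=
      (hg _).hasGradientAt.hasDerivAt_comp_lineMap
    have h := (hline.sub ((hasDerivAt_id t).mul_const ⟪gradient g x, y - x⟫)).sub
      ((hasDerivAt_pow 2 t).const_mul (L / 2 * ‖y - x‖ ^ 2))
    refine h.congr_deriv ?_
    simp only [ψ']
    ring
  have hψ'_nonpos : ∀ t ∈ interior (Set.Ici (0 : ℝ)), ψ' t ≤ 0 := fun t ht => by
    rw [interior_Ici] at ht
    have hdist : ‖AffineMap.lineMap x y t - x‖ = t * ‖y - x‖ := by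
      rw [AffineMap.lineMap_apply_module', add_sub_cancel_right, norm_smul,
        Real.norm_of_nonneg ht.le]
    have hcs := real_inner_le_norm (gradient g (AffineMap.lineMap x y t) - gradient g x) (y - x)
    have hlipt :=
      mul_le_mul_of_nonneg_right (hlip (AffineMap.lineMap x y t) x) (norm_nonneg (y - x))
    rw [hdist] at hlipt
    simp only [ψ', ← inner_sub_left]
    nlinarith
  have hanti := antitoneOn_of_hasDerivWithinAt_nonpos (convex_Ici 0)
    (fun t _ => (hψ t).continuousAt.continuousWithinAt)
    (fun t _ => (hψ t).hasDerivWithinAt) hψ'_nonpos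
  have := hanti Set.self_mem_Ici (Set.mem_Ici.mpr zero_le_one) zero_le_one
  simp only [ψ, AffineMap.lineMap_apply_zero, AffineMap.lineMap_apply_one] at this
  linarith

theorem hasGradientAt_const_mul_sum {ι : Type*} (s : Finset ι) {f : ι → E → ℝ} (c : ℝ)
    (hf : ∀ i ∈ s, DifferentiableAt ℝ (f i) x) :
    HasGradientAt (fun w => c * ∑ i ∈ s, f i w) (c • ∑ i ∈ s, gradient (f i) x) x := by
  rw [hasGradientAt_iff_hasFDerivAt, map_smul, map_sum]
  exact (HasFDerivAt.fun_sum fun i hi => (hf i hi).hasGradientAt).const_mul c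

theorem norm_gradient_average_sub_le {n : ℕ} (hn : 0 < n) {f : Fin n → E → ℝ} {L : ℝ}
    (hf : ∀ i, Differentiable ℝ (f i))
    (hLip : ∀ i a b, ‖gradient (f i) a - gradient (f i) b‖ ≤ L * ‖a - b‖) (a b : E) :
    ‖gradient (fun w => 1 / (n : ℝ) * ∑ i, f i w) a
      - gradient (fun w => 1 / (n : ℝ) * ∑ i, f i w) b‖ ≤ L * ‖a - b‖ := by
  rw [(hasGradientAt_const_mul_sum _ _ fun i _ => hf i a).gradient,
    (hasGradientAt_const_mul_sum _ _ fun i _ => hf i b).gradient, ← smul_sub,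
    ← sum_sub_distrib, norm_smul, Real.norm_of_nonneg (by positivity)]
  calc 1 / (n : ℝ) * ‖∑ i, (gradient (f i) a - gradient (f i) b)‖
      ≤ 1 / (n : ℝ) * ∑ _i : Fin n, L * ‖a - b‖ := by
        gcongr
        exact (norm_sum_le _ _).trans (sum_le_sum fun i _ => hLip i a b)
    _ = L * ‖a - b‖ := by
        rw [sum_const, card_univ, Fintype.card_fin, nsmul_eq_mul]
        field_simp

theorem sarah_epoch_descent {P : E → ℝ} {L η : ℝ} {n : ℕ} (hP : Differentiable ℝ P)
    (hLip : ∀ a b, ‖gradient P a - gradient P b‖ ≤ L * ‖a - b‖) (hL : 0 ≤ L) (hη : 0 ≤ η)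
    (hn : 1 ≤ n) (hηL : η * L * n ≤ 1 / 8) {W V : ℕ → E} (hV0 : V 0 = gradient P (W 0))
    (hW : ∀ i < n, W (i + 1) = W i - η • V i)
    (hV : ∀ i < n, ‖V (i + 1) - V i‖ ≤ η * L * ‖V i‖) :
    P (W n - η • V n) ≤ P (W 0) - η * (n + 1) / 4 * ‖gradient P (W 0)‖ ^ 2 := by
  have hc : 0 ≤ η * L := mul_nonneg hη hL
  have hn' : (1 : ℝ) ≤ n := by exact_mod_cast hn
  have hgrowth : (1 + η * L) ^ n ≤ 8 / 7 := by
    have := one_add_pow_mul_one_sub_mul_le_one hc (by nlinarith) n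
    nlinarith [pow_nonneg (show 0 ≤ 1 + η * L by linarith) n]
  have hdev : ∀ i ∈ range (n + 1), ‖V i - V 0‖ ≤ 1 / 7 * ‖V 0‖ := fun i hi => by
    have hin : i ≤ n := Nat.lt_succ_iff.mp (mem_range.mp hi)
    have hpow : (1 + η * L) ^ i ≤ (1 + η * L) ^ n := pow_le_pow_right₀ (by linarith) hin
    calc ‖V i - V 0‖ ≤ ((1 + η * L) ^ i - 1) * ‖V 0‖ :=
          norm_sub_zero_le_of_norm_succ_sub_le hc hV i hin
      _ ≤ 1 / 7 * ‖V 0‖ := by gcongr; linarith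
  set S := ∑ i ∈ range (n + 1), V i with hS
  have hout : W n - η • V n = W 0 - η • S := by
    rw [eq_sub_smul_sum_of_eq_sub_smul hW, hS, sum_range_succ, smul_add]
    abel
  have hinner := card_mul_le_inner_sum_of_norm_sub_le _ hdev
  have hnorm := norm_sum_le_card_mul_of_norm_sub_le _ hdev
  rw [card_range, Nat.cast_add_one] at hinner hnorm
  have hdesc := le_add_inner_gradient_add_sq_of_lipschitz hP hLip (W 0) (W 0 - η • S)
  rw [sub_sub_cancel_left, inner_neg_right, real_inner_smul_right, norm_neg, norm_smul,
    Real.norm_of_nonneg hη, ← hV0] at hdesc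
  rw [hout, ← hV0]
  set G := ‖V 0‖
  have hgain : η * ((n + 1) * ((1 - 1 / 7) * G ^ 2)) ≤ η * ⟪V 0, S⟫ := by gcongr
  have hloss : L / 2 * (η * ‖S‖) ^ 2 ≤ 8 / 49 * (η * (n + 1) * G ^ 2) := by
    have hηLn : η * L * (n + 1) ≤ 1 / 4 := by nlinarith
    calc L / 2 * (η * ‖S‖) ^ 2 ≤ L / 2 * (η * ((n + 1) * ((1 + 1 / 7) * G))) ^ 2 := by gcongr
      _ = 32 / 49 * (η * L * (n + 1)) * (η * (n + 1) * G ^ 2) := by ring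
      _ ≤ 32 / 49 * (1 / 4) * (η * (n + 1) * G ^ 2) := by gcongr
      _ = 8 / 49 * (η * (n + 1) * G ^ 2) := by ring
  nlinarith [mul_nonneg (mul_nonneg hη (by linarith : (0 : ℝ) ≤ n + 1)) (sq_nonneg G)]

end Gradient

theorem rr_sarah_geometric_decay_general
    {d n : ℕ} (hn : 1 ≤ n)
    (f : Fin n → EuclideanSpace ℝ (Fin d) → ℝ)
    (P : EuclideanSpace ℝ (Fin d) → ℝ)
    (hP : ∀ w, P w = (1 / (n : ℝ)) * ∑ i, f i w)
    (L μ δ η : ℝ) (hL : 0 < L) (hμ : 0 < μ)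
    (hdiff : ∀ i, Differentiable ℝ (f i))
    (hLip : ∀ i w₁ w₂, ‖gradient (f i) w₁ - gradient (f i) w₂‖ ≤ L * ‖w₁ - w₂‖)
    (hsc : StrongConvexOn Set.univ μ P)
    (wstar : EuclideanSpace ℝ (Fin d)) (hmin : IsMinOn P Set.univ wstar)
    (Pstar : ℝ) (hPstar : Pstar = P wstar)
    (hη0 : 0 < η)
    (hη : η ≤ min (1 / (8 * n * L)) (1 / (8 * n ^ 2 * δ)))
    -- the RR-SARAH trajectory
    (π : ℕ → Equiv.Perm (Fin n))
    (w : ℕ → EuclideanSpace ℝ (Fin d))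
    (W V : ℕ → ℕ → EuclideanSpace ℝ (Fin d))
    (hW0 : ∀ s, W s 0 = w s) (hV0 : ∀ s, V s 0 = gradient P (w s))
    (hWrec : ∀ s, ∀ i : Fin n, W s ((i : ℕ) + 1) = W s i - η • V s i)
    (hVrec : ∀ s, ∀ i : Fin n, V s ((i : ℕ) + 1)
      = V s i + gradient (f (π s i)) (W s ((i : ℕ) + 1)) - gradient (f (π s i)) (W s i))
    (hwnext : ∀ s, w (s + 1) = W s n - η • V s n) :
    ∀ S : ℕ,
      P (w S) - Pstar ≤ (1 - η * μ * ((n : ℝ) + 1) / 2) ^ S * (P (w 0) - Pstar) := by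
  have hPeq : P = fun w => 1 / (n : ℝ) * ∑ i, f i w := funext hP
  have hPdiff : Differentiable ℝ P := fun x => by
    rw [hPeq]
    exact (hasGradientAt_const_mul_sum _ _ fun i _ => hdiff i x).differentiableAt
  have hLipP : ∀ a b, ‖gradient P a - gradient P b‖ ≤ L * ‖a - b‖ := by
    rw [hPeq]
    exact norm_gradient_average_sub_le hn hdiff hLip
  have hηL : η * L * n ≤ 1 / 8 := by
    have := (le_div_iff₀ (by positivity)).mp (hη.trans (min_le_left _ _))
    linarith
  have hstep : ∀ s, ∀ i < n, ‖V s (i + 1) - V s i‖ ≤ η * L * ‖V s i‖ := fun s i hi => by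
    have hgrad := hLip (π s ⟨i, hi⟩) (W s (i + 1)) (W s i)
    rw [hWrec s ⟨i, hi⟩, sub_sub_cancel_left, norm_neg, norm_smul, Real.norm_of_nonneg hη0.le,
      ← hWrec s ⟨i, hi⟩] at hgrad
    rw [hVrec s ⟨i, hi⟩, add_sub_assoc, add_sub_cancel_left]
    linarith
  have hdescent : ∀ s, P (w (s + 1)) ≤ P (w s) - η * (n + 1) / 4 * ‖gradient P (w s)‖ ^ 2 :=
    fun s => by
      have := sarah_epoch_descent hPdiff hLipP hL.le hη0.le hn hηL (by rw [hV0, hW0])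
        (fun i hi => hWrec s ⟨i, hi⟩) (hstep s)
      rwa [hW0, ← hwnext] at this
  refine le_pow_mul_of_le_mul (fun s => ?_) (fun s => ?_)
  · linarith [hPstar ▸ isMinOn_iff.mp hmin (w s) (Set.mem_univ _)]
  · have hPL := hsc.two_mul_sub_le_sq_norm_gradient hμ (hPdiff (w s)) hmin
    have := hdescent s
    rw [← hPstar] at hPL
    nlinarith [mul_nonneg hη0.le (show (0 : ℝ) ≤ n + 1 by positivity)]

/-- Corollary to Theorem 2, geometric decay form, for RR-SARAH. -/
theorem rr_sarah_geometric_decay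
    {d n : ℕ} (hd : 1 ≤ d) (hn : 1 ≤ n)
    (f : Fin n → EuclideanSpace ℝ (Fin d) → ℝ)
    (P : EuclideanSpace ℝ (Fin d) → ℝ)
    (hP : ∀ w, P w = (1 / (n : ℝ)) * ∑ i, f i w)
    (L μ δ η : ℝ) (hL : 0 < L) (hμ : 0 < μ) (hδ : 0 < δ)
    (hdiff : ∀ i, Differentiable ℝ (f i))
    (hconv : ∀ i, ConvexOn ℝ Set.univ (f i))
    (hLip : ∀ i w₁ w₂, ‖gradient (f i) w₁ - gradient (f i) w₂‖ ≤ L * ‖w₁ - w₂‖)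
    (hsc : StrongConvexOn Set.univ μ P)
    (wstar : EuclideanSpace ℝ (Fin d)) (hmin : IsMinOn P Set.univ wstar)
    (Pstar : ℝ) (hPstar : Pstar = P wstar)
    (hsim : ∀ i w₁ w₂,
      ‖(gradient (f i) w₁ - gradient P w₁) - (gradient (f i) w₂ - gradient P w₂)‖
        ≤ (δ / 2) * ‖w₁ - w₂‖)
    (hη0 : 0 < η)
    (hη : η ≤ min (1 / (8 * n * L)) (1 / (8 * n ^ 2 * δ)))
    -- the RR-SARAH trajectory
    (π : ℕ → Equiv.Perm (Fin n))
    (w : ℕ → EuclideanSpace ℝ (Fin d))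
    (W V : ℕ → ℕ → EuclideanSpace ℝ (Fin d))
    (hW0 : ∀ s, W s 0 = w s) (hV0 : ∀ s, V s 0 = gradient P (w s))
    (hWrec : ∀ s, ∀ i : Fin n, W s ((i : ℕ) + 1) = W s i - η • V s i)
    (hVrec : ∀ s, ∀ i : Fin n, V s ((i : ℕ) + 1)
      = V s i + gradient (f (π s i)) (W s ((i : ℕ) + 1)) - gradient (f (π s i)) (W s i))
    (hwnext : ∀ s, w (s + 1) = W s n - η • V s n) :
    ∀ S : ℕ,
      P (w S) - Pstar ≤ (1 - η * μ * ((n : ℝ) + 1) / 2) ^ S * (P (w 0) - Pstar) :=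
  rr_sarah_geometric_decay_general hn f P hP L μ δ η hL hμ hdiff hLip hsc wstar hmin Pstar hPstar
    hη0 hη π w W V hW0 hV0 hWrec hVrec hwnext
end
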